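/- Let k ≥ 0 and n, p ≥ 0. The number of words π ∈ [2k+1]^n with des_O(π) = p, where O is the set of odd positive integers (equivalently, the number of words π ∈ [2k+1]^n with ris_O(π) = p), equals Σ_{m=0}^{n} Σ_{j=0}^{m} Σ_{i=0}^{kj+j} (−1)^{n+p+j} · 2^{m−n+i} · C(m, j) · C(m−j, n−i) · C(kj+j, i) · C(n−m, p), where each summand is interpreted in ℚ (every term in which the exponent m−n+i is negative has C(m−j, n−i) = 0 and hence vanishes, so the total is an integer). -/

import Mathlib

/-!
Let `F = ∑ₙ (∑_{w ∈ [2k+1]ⁿ} x ^ des_O w) tⁿ` and `u = (x - 1) t`. A word `b w` has one more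
`O`-descent than `w` exactly when `b` is odd and exceeds the first letter of `w`; sorting words by
their first letter, pairing each odd letter `2j + 1` with the even letter `2j + 2` and solving the
resulting linear recursion in `j` gives

  `F · (x + 1 + u - 2 (1 + u) ^ (k + 1)) = x - 1`.

The left factor is `c + V (c t)` with `c = x - 1` and `V s = 2 + s - 2 (1 + s) ^ (k + 1)`, a series
without constant term, so multiplying by the truncated geometric series `∑_{m ≤ n} (-V (c t))ᵐ cⁿ⁻ᵐ`
yields `[tⁿ] F = ∑_{m ≤ n} (-1)ᵐ (x - 1)ⁿ⁻ᵐ [sⁿ] V(s)ᵐ`. Expanding `Vᵐ` binomially and reading off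
the coefficient of `xᵖ` gives the formula. Rises are reduced to descents by the complement
`b ↦ 2k + 2 - b`, which preserves parity on `[2k + 1]`.
-/
open Finset

/-- The number of descents of the word `w : Fin n → Fin k` (encoding a word over the
alphabet `[k] = {1,…,k}`, position `p` carrying the letter `(w p : ℕ) + 1`) whose
first element satisfies `X`. -/
def descCount (X : ℕ → Prop) [DecidablePred X] {k n : ℕ} (w : Fin n → Fin k) : ℕ :=
  (Finset.univ.filter (fun p : Fin n × Fin n =>
    (p.1 : ℕ) + 1 = (p.2 : ℕ) ∧ (w p.2 : ℕ) < (w p.1 : ℕ) ∧ X ((w p.1 : ℕ) + 1))).card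

/-- The number of rises of the word `w` whose first element satisfies `X`. -/
def riseCount (X : ℕ → Prop) [DecidablePred X] {k n : ℕ} (w : Fin n → Fin k) : ℕ :=
  (Finset.univ.filter (fun p : Fin n × Fin n =>
    (p.1 : ℕ) + 1 = (p.2 : ℕ) ∧ (w p.1 : ℕ) < (w p.2 : ℕ) ∧ X ((w p.1 : ℕ) + 1))).card

open PowerSeries

theorem Fintype.sum_fun_fin_succ {M α : Type*} [AddCommMonoid M] [Fintype α] {n : ℕ}
    (f : (Fin (n + 1) → α) → M) : ∑ w, f w = ∑ a, ∑ w : Fin n → α, f (Fin.cons a w) := by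
  rw [← (Fin.consEquiv fun _ => α).sum_comp, Fintype.sum_prod_type]
  rfl

theorem PowerSeries.coeff_one_add_X_pow {R : Type*} [CommSemiring R] (a d : ℕ) :
    coeff d ((1 + X : R⟦X⟧) ^ a) = a.choose d := by
  have : ((1 + X : R⟦X⟧) ^ a) = (((1 + Polynomial.X) ^ a : Polynomial R) : R⟦X⟧) := by
    simp
  rw [this, Polynomial.coeff_coe, Polynomial.coeff_one_add_X_pow]

theorem PowerSeries.coeff_one_add_C_mul_X_pow {R : Type*} [CommRing R] (r : R) (a d : ℕ) :
    coeff d ((1 + C r * X : R⟦X⟧) ^ a) = r ^ d * a.choose d := by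
  rw [← coeff_one_add_X_pow, ← coeff_rescale, map_pow (rescale r), map_add, map_one, rescale_X]

theorem PowerSeries.coeff_one_add_C_mul_X_pow_mul_one_add_X_pow {R : Type*} [CommRing R] (r : R)
    (a b n : ℕ) :
    coeff n ((1 + C r * X) ^ a * (1 + X) ^ b)
      = ∑ i ∈ range (b + 1),
          b.choose i * r ^ (n - i) * ((if i ≤ n then a.choose (n - i) else 0 : ℕ) : R) := by
  rw [add_comm 1 X, add_pow X 1 b, mul_sum, map_sum]
  refine sum_congr rfl fun i _ => ?_
  rw [one_pow, mul_one, mul_comm, mul_assoc, coeff_X_pow_mul']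
  split_ifs
  · rw [← map_natCast (C (R := R)), coeff_C_mul, coeff_one_add_C_mul_X_pow]
    ring
  · simp

theorem PowerSeries.coeff_eq_sum_of_mul_C_add_rescale_eq_C {R : Type*} [CommRing R] [IsDomain R]
    {c : R} (hc : c ≠ 0) {F V : R⟦X⟧} (hV : constantCoeff V = 0) (h : F * (C c + rescale c V) = C c)
    (n : ℕ) : coeff n F = ∑ m ∈ range (n + 1), (-1) ^ m * c ^ (n - m) * coeff n (V ^ m) := by
  obtain ⟨G, hG⟩ : X ^ (n + 1) ∣ (-rescale c V) ^ (n + 1) := by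
    refine pow_dvd_pow_of_dvd (X_dvd_iff.2 ?_) _
    rw [map_neg, ← coeff_zero_eq_constantCoeff_apply, coeff_rescale,
      coeff_zero_eq_constantCoeff_apply, hV, mul_zero, neg_zero]
  have hterm (m : ℕ) : C ((-1) ^ m * c ^ (n - m)) * rescale c (V ^ m)
      = (-rescale c V) ^ m * C c ^ (n - m) := by
    rw [map_mul, map_pow, map_pow, map_pow, neg_pow, map_neg, map_one]
    ring
  -- multiply `h` by the truncated geometric series `∑ (-rescale c V) ^ m * (C c) ^ (n - m)`
  have key : C c * ∑ m ∈ range (n + 1), C ((-1) ^ m * c ^ (n - m)) * rescale c (V ^ m)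
      = F * C c ^ (n + 1) - X ^ (n + 1) * (F * G) := by
    have hgeom := geom_sum₂_mul (-rescale c V) (C c) (n + 1)
    rw [Nat.add_sub_cancel] at hgeom
    simp only [hterm]
    rw [mul_left_comm, ← hG]
    linear_combination (-∑ m ∈ range (n + 1), (-rescale c V) ^ m * C c ^ (n - m)) * h - F * hgeom
  have hcoeff := congrArg (coeff n) key
  rw [← map_pow, map_sub, coeff_mul_C, coeff_C_mul, coeff_X_pow_mul', if_neg (by omega), sub_zero,
    map_sum] at hcoeff
  simp only [coeff_C_mul, coeff_rescale] at hcoeff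
  refine mul_left_cancel₀ (pow_ne_zero (n + 1) hc) ?_
  rw [mul_comm, ← hcoeff, mul_sum, mul_sum]
  refine sum_congr rfl fun m _ => ?_
  ring

theorem Polynomial.coeff_sum_X_pow_eq_card_filter {R : Type*} [CommRing R] {ι : Type*} [Fintype ι]
    (f : ι → ℕ) (p : ℕ) :
    (∑ i, (Polynomial.X : Polynomial R) ^ f i).coeff p = (#{i | f i = p} : R) := by
  rw [Polynomial.finsetSum_coeff, natCast_card_filter]
  simp only [Polynomial.coeff_X_pow, eq_comm]

theorem neg_one_pow_mul_neg_one_pow_sub_mul_choose {R : Type*} [Ring R] {m n : ℕ} (p : ℕ)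
    (h : m ≤ n) :
    (-1 : R) ^ m * (-1) ^ (n - m - p) * (n - m).choose p = (-1) ^ (n + p) * (n - m).choose p := by
  by_cases hp : p ≤ n - m
  · rw [← pow_add, show n + p = m + (n - m - p) + 2 * p by omega, pow_add _ _ (2 * p), pow_mul]
    simp
  · simp [Nat.choose_eq_zero_of_lt (not_le.1 hp)]

theorem zpow_sub_add_eq_pow_mul_inv_pow {K : Type*} [DivisionRing K] {a : K} (ha : a ≠ 0)
    (m : ℕ) {n i : ℕ} (h : i ≤ n) : a ^ ((m : ℤ) - n + i) = a ^ m * a⁻¹ ^ (n - i) := by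
  rw [show (m : ℤ) - n + i = m - (n - i : ℕ) by push_cast [h]; ring, zpow_sub₀ ha, zpow_natCast,
    zpow_natCast, inv_pow, div_eq_mul_inv]

section Words

variable (S : ℕ → Prop) [DecidablePred S] {K : ℕ}

theorem descCount_eq_card {n : ℕ} (w : Fin (n + 1) → Fin K) :
    descCount S w = #{i : Fin n | (w i.succ : ℕ) < w i.castSucc ∧ S ((w i.castSucc : ℕ) + 1)} := by
  refine (card_nbij (fun i => (i.castSucc, i.succ)) ?_ ?_ ?_).symm
  · intro i hi
    simp_all
  · intro i _ j _ hij
    exact Fin.castSucc_injective _ (congrArg Prod.fst hij)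
  · rintro ⟨p, q⟩ hpq
    simp only [coe_filter, mem_univ, true_and, Set.mem_ofPred_eq] at hpq
    obtain ⟨hpq, hdesc⟩ := hpq
    have hp : (⟨p, by omega⟩ : Fin n).castSucc = p := rfl
    have hq : (⟨p, by omega⟩ : Fin n).succ = q := Fin.ext hpq
    exact ⟨⟨p, by omega⟩, by simpa [hp, hq] using hdesc, Prod.ext hp hq⟩

theorem descCount_cons {n : ℕ} (b : Fin K) (w : Fin (n + 1) → Fin K) :
    descCount S (Fin.cons b w : Fin (n + 2) → Fin K)
      = descCount S w + if (w 0 : ℕ) < b ∧ S ((b : ℕ) + 1) then 1 else 0 := by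
  rw [descCount_eq_card, descCount_eq_card, card_filter, card_filter, Fin.sum_univ_succ]
  simp only [Fin.castSucc_zero, Fin.cons_zero, Fin.succ_zero_eq_one, Fin.cons_one,
    ← Fin.succ_castSucc, Fin.cons_succ]
  ring

theorem descCount_cons_nil (b : Fin K) (w : Fin 0 → Fin K) :
    descCount S (Fin.cons b w : Fin 1 → Fin K) = 0 := by
  simp [descCount_eq_card]

theorem descCount_nil (w : Fin 0 → Fin K) : descCount S w = 0 := by
  simp [descCount]

end Words

section Series

variable {R : Type*} [CommRing R] (x : R) (S : ℕ → Prop) [DecidablePred S] (K : ℕ)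

noncomputable def descSeries : R⟦X⟧ :=
  mk fun n => ∑ w : Fin n → Fin K, x ^ descCount S w

noncomputable def consSeries (b : Fin K) : R⟦X⟧ :=
  mk fun n => ∑ w : Fin n → Fin K, x ^ descCount S (Fin.cons b w : Fin (n + 1) → Fin K)

noncomputable def consSeriesBelow (a : ℕ) : R⟦X⟧ :=
  ∑ b ∈ univ.filter (fun b : Fin K => (b : ℕ) < a), consSeries x S K b

variable {K}

theorem descSeries_eq_one_add_X_mul_sum_consSeries :
    descSeries x S K = 1 + X * ∑ b, consSeries x S K b := by
  ext n
  cases n with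
  | zero => simp [descSeries, descCount_nil]
  | succ n =>
    rw [map_add, coeff_succ_X_mul, map_sum, descSeries, coeff_mk, Fintype.sum_fun_fin_succ]
    simp [consSeries]

theorem coeff_consSeriesBelow (a n : ℕ) :
    coeff n (consSeriesBelow x S K a)
      = ∑ w : Fin (n + 1) → Fin K, if (w 0 : ℕ) < a then x ^ descCount S w else 0 := by
  simp only [Fintype.sum_fun_fin_succ, Fin.cons_zero, sum_ite_irrel, sum_const_zero]
  rw [← sum_filter, consSeriesBelow, map_sum]
  simp [consSeries]

theorem consSeries_eq_descSeries_add (b : Fin K) :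
    consSeries x S K b = descSeries x S K
      + if S (b + 1) then C (x - 1) * X * consSeriesBelow x S K b else 0 := by
  ext n
  by_cases hS : S (b + 1)
  · rw [if_pos hS]
    cases n with
    | zero => simp [descSeries, consSeries, descCount_nil, descCount_cons_nil]
    | succ n =>
      rw [map_add, mul_assoc, mul_left_comm, coeff_succ_X_mul, coeff_C_mul, coeff_consSeriesBelow,
        mul_sum, descSeries, consSeries, coeff_mk, coeff_mk, ← sum_add_distrib]
      refine sum_congr rfl fun w _ => ?_
      rw [descCount_cons]
      by_cases hw : (w 0 : ℕ) < b
      · simp only [hw, hS, and_self, if_true, pow_succ]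
        ring
      · simp [hw]
  · cases n with
    | zero => simp [descSeries, consSeries, descCount_nil, descCount_cons_nil, hS]
    | succ n => simp [descSeries, consSeries, descCount_cons, hS]

theorem consSeriesBelow_succ {a : ℕ} (ha : a < K) :
    consSeriesBelow x S K (a + 1) = consSeriesBelow x S K a + consSeries x S K ⟨a, ha⟩ := by
  have : univ.filter (fun b : Fin K => (b : ℕ) < a + 1)
      = insert ⟨a, ha⟩ (univ.filter fun b : Fin K => (b : ℕ) < a) := by
    ext b
    simp only [mem_filter, mem_univ, true_and, mem_insert, Fin.ext_iff]
    omega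
  rw [consSeriesBelow, this, sum_insert (by simp), add_comm, consSeriesBelow]

theorem consSeriesBelow_self : consSeriesBelow x S K K = ∑ b, consSeries x S K b := by
  rw [consSeriesBelow, filter_true_of_mem fun b _ => b.isLt]

end Series

section OddAlphabet

variable {R : Type*} [CommRing R] (x : R)

local notation "𝒪" => fun a : ℕ => a % 2 = 1

theorem consSeriesBelow_two_mul (k : ℕ) {j : ℕ} (hj : j ≤ k) :
    C (x - 1) * X * consSeriesBelow x 𝒪 (2 * k + 1) (2 * j) + 2 * descSeries x 𝒪 (2 * k + 1)
      = 2 * descSeries x 𝒪 (2 * k + 1) * (1 + C (x - 1) * X) ^ j := by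
  induction j with
  | zero => simp [consSeriesBelow]
  | succ j ih =>
    -- the letters `2j, 2j + 1 : Fin (2k+1)` stand for the odd value `2j + 1` and the even `2j + 2`
    have hstep : consSeriesBelow x 𝒪 (2 * k + 1) (2 * (j + 1))
        = (1 + C (x - 1) * X) * consSeriesBelow x 𝒪 (2 * k + 1) (2 * j)
          + 2 * descSeries x 𝒪 (2 * k + 1) := by
      rw [mul_add_one, consSeriesBelow_succ x 𝒪 (by omega), consSeriesBelow_succ x 𝒪 (by omega),
        consSeries_eq_descSeries_add, consSeries_eq_descSeries_add, if_pos (by simp),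
        if_neg (by simp; omega)]
      ring
    rw [hstep]
    linear_combination (1 + C (x - 1) * X) * ih (by omega)

theorem descSeries_odd_mul_eq (k : ℕ) :
    descSeries x 𝒪 (2 * k + 1)
        * (C (x - 1) + 2 + C (x - 1) * X - 2 * (1 + C (x - 1) * X) ^ (k + 1))
      = C (x - 1) := by
  have h := descSeries_eq_one_add_X_mul_sum_consSeries x 𝒪 (K := 2 * k + 1)
  rw [← consSeriesBelow_self, consSeriesBelow_succ x 𝒪 (by omega), consSeries_eq_descSeries_add,
    if_pos (by simp)] at h
  linear_combination C (x - 1) * h + (1 + C (x - 1) * X) * consSeriesBelow_two_mul x k le_rfl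

theorem coeff_two_add_X_sub_two_mul_pow (k m n : ℕ) :
    coeff n ((2 + X - 2 * (1 + X) ^ (k + 1) : ℚ⟦X⟧) ^ m)
      = 2 ^ m * ∑ j ∈ range (m + 1), (-1) ^ j * m.choose j
          * ∑ i ∈ range (k * j + j + 1), (k * j + j).choose i * 2⁻¹ ^ (n - i)
            * ((if i ≤ n then (m - j).choose (n - i) else 0 : ℕ) : ℚ) := by
  have hsplit : (2 + X - 2 * (1 + X) ^ (k + 1) : ℚ⟦X⟧)
      = C 2 * (-(1 + X) ^ (k + 1) + (1 + C 2⁻¹ * X)) := by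
    have h2 : (2 : ℚ⟦X⟧) * C 2⁻¹ = 1 := by
      rw [← map_ofNat C 2, ← map_mul, mul_inv_cancel₀ two_ne_zero, map_one]
    rw [map_ofNat]
    linear_combination (-X) * h2
  rw [hsplit, mul_pow, ← map_pow, coeff_C_mul, add_pow, map_sum]
  congr 1
  refine sum_congr rfl fun j _ => ?_
  have hterm : (-(1 + X) ^ (k + 1)) ^ j * (1 + C 2⁻¹ * X) ^ (m - j) * (m.choose j : ℚ⟦X⟧)
      = C ((-1) ^ j * (m.choose j : ℚ)) * ((1 + C 2⁻¹ * X) ^ (m - j) * (1 + X) ^ (k * j + j)) := by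
    rw [neg_pow, ← pow_mul, map_mul, map_pow, map_neg, map_one, map_natCast,
      show (k + 1) * j = k * j + j by ring]
    ring
  rw [hterm, coeff_C_mul, coeff_one_add_C_mul_X_pow_mul_one_add_X_pow]

theorem coeff_descSeries_odd (k n : ℕ) :
    coeff n (descSeries (Polynomial.X : Polynomial ℚ) 𝒪 (2 * k + 1))
      = ∑ m ∈ range (n + 1), (-1) ^ m * (Polynomial.X - 1) ^ (n - m)
          * Polynomial.C (coeff n ((2 + X - 2 * (1 + X) ^ (k + 1) : ℚ⟦X⟧) ^ m)) := by
  have hV : constantCoeff (map Polynomial.C (2 + X - 2 * (1 + X) ^ (k + 1) : ℚ⟦X⟧)) = 0 := by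
    simp
  have h : descSeries Polynomial.X 𝒪 (2 * k + 1) * (C (Polynomial.X - 1)
      + rescale (Polynomial.X - 1) (map Polynomial.C (2 + X - 2 * (1 + X) ^ (k + 1) : ℚ⟦X⟧)))
      = C (Polynomial.X - 1) := by
    have hodd := descSeries_odd_mul_eq (Polynomial.X : Polynomial ℚ) k
    simp only [map_add, map_sub, map_mul, map_pow, map_ofNat, map_one, map_X, rescale_X] at hodd ⊢
    linear_combination hodd
  rw [coeff_eq_sum_of_mul_C_add_rescale_eq_C (Polynomial.X_sub_C_ne_zero 1) hV h]
  simp only [← map_pow, coeff_map]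

theorem card_descCount_odd (k n p : ℕ) :
    (#{w : Fin n → Fin (2 * k + 1) | descCount 𝒪 w = p} : ℚ)
      = ∑ m ∈ range (n + 1), ∑ j ∈ range (m + 1), ∑ i ∈ range (k * j + j + 1),
          (-1 : ℚ) ^ (n + p + j) * (2 : ℚ) ^ ((m : ℤ) - (n : ℤ) + (i : ℤ)) * (m.choose j : ℚ)
            * ((if i ≤ n then (m - j).choose (n - i) else 0 : ℕ) : ℚ)
            * ((k * j + j).choose i : ℚ) * ((n - m).choose p : ℚ) := by
  have h := congrArg (Polynomial.coeff · p) (coeff_descSeries_odd k n)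
  rw [descSeries, coeff_mk, Polynomial.coeff_sum_X_pow_eq_card_filter] at h
  rw [h, Polynomial.finsetSum_coeff]
  refine sum_congr rfl fun m hm => ?_
  have hmn : m ≤ n := Nat.lt_succ_iff.1 (mem_range.1 hm)
  have hcoeff (v : ℚ) : ((-1) ^ m * (Polynomial.X - 1) ^ (n - m) * Polynomial.C v).coeff p
      = (-1) ^ m * v * ((-1) ^ (n - m - p) * (n - m).choose p) := by
    rw [show (-1) ^ m * (Polynomial.X - 1) ^ (n - m) * Polynomial.C v
        = Polynomial.C ((-1) ^ m * v) * (Polynomial.X + Polynomial.C (-1)) ^ (n - m) by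
          simp only [map_mul, map_pow, map_neg, map_one]; ring,
      Polynomial.coeff_C_mul, Polynomial.coeff_X_add_C_pow]
  rw [hcoeff, coeff_two_add_X_sub_two_mul_pow]
  simp only [mul_sum, sum_mul]
  refine sum_congr rfl fun j _ => sum_congr rfl fun i _ => ?_
  by_cases hi : i ≤ n
  · rw [zpow_sub_add_eq_pow_mul_inv_pow two_ne_zero m hi]
    linear_combination (2 ^ m * (-1) ^ j * (m.choose j : ℚ) * ((k * j + j).choose i : ℚ)
      * 2⁻¹ ^ (n - i) * ((if i ≤ n then (m - j).choose (n - i) else 0 : ℕ) : ℚ))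
      * neg_one_pow_mul_neg_one_pow_sub_mul_choose (R := ℚ) p hmn
  · simp [hi]

theorem descCount_rev_comp {k n : ℕ} (w : Fin n → Fin (2 * k + 1)) :
    descCount 𝒪 (Fin.rev ∘ w) = riseCount 𝒪 w := by
  rw [riseCount, descCount]
  congr 1
  refine filter_congr fun q _ => ?_
  have := (w q.1).isLt
  have := (w q.2).isLt
  simp only [Function.comp_apply, Fin.val_rev]
  omega

theorem card_riseCount_eq_card_descCount (k n p : ℕ) :
    #{w : Fin n → Fin (2 * k + 1) | riseCount 𝒪 w = p}
      = #{w : Fin n → Fin (2 * k + 1) | descCount 𝒪 w = p} := by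
  have hrev (w : Fin n → Fin (2 * k + 1)) : Fin.rev ∘ Fin.rev ∘ w = w := by
    funext i
    simp
  refine card_nbij' (Fin.rev ∘ ·) (Fin.rev ∘ ·) (fun w hw => ?_) (fun w hw => ?_)
    (fun w _ => hrev w) (fun w _ => hrev w)
  · simpa [descCount_rev_comp] using hw
  · simpa [← descCount_rev_comp, hrev] using hw

end OddAlphabet

/- `O = {1,3,5,…}` is encoded as `fun x => x % 2 = 1`.  The summands are interpreted
in `ℚ`, with `2^(m-n+i)` the integer power `(2 : ℚ) ^ ((m : ℤ) - n + i)`; the binomial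
coefficient `C(m-j, n-i)` is `0` when `n - i < 0`, i.e. when `i > n`, which the
`if`-guard makes explicit (truncated natural subtraction would not be faithful). -/
theorem stmt_15 (k n p : ℕ) :
    ((Finset.univ.filter (fun w : Fin n → Fin (2 * k + 1) =>
          descCount (fun x => x % 2 = 1) w = p)).card : ℚ)
        = ∑ m ∈ Finset.range (n + 1), ∑ j ∈ Finset.range (m + 1),
            ∑ i ∈ Finset.range (k * j + j + 1),
              (-1 : ℚ) ^ (n + p + j) * (2 : ℚ) ^ ((m : ℤ) - (n : ℤ) + (i : ℤ))
                * (m.choose j : ℚ)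
                * ((if i ≤ n then (m - j).choose (n - i) else 0 : ℕ) : ℚ)
                * ((k * j + j).choose i : ℚ) * ((n - m).choose p : ℚ)
      ∧ ((Finset.univ.filter (fun w : Fin n → Fin (2 * k + 1) =>
            riseCount (fun x => x % 2 = 1) w = p)).card : ℚ)
        = ∑ m ∈ Finset.range (n + 1), ∑ j ∈ Finset.range (m + 1),
            ∑ i ∈ Finset.range (k * j + j + 1),
              (-1 : ℚ) ^ (n + p + j) * (2 : ℚ) ^ ((m : ℤ) - (n : ℤ) + (i : ℤ))
                * (m.choose j : ℚ)
                * ((if i ≤ n then (m - j).choose (n - i) else 0 : ℕ) : ℚ)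
                * ((k * j + j).choose i : ℚ) * ((n - m).choose p : ℚ) := by
  refine ⟨card_descCount_odd k n p, ?_⟩
  rw [card_riseCount_eq_card_descCount]
  exact card_descCount_odd k n p
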